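/- arXiv:2305.04968 — 4 statements merged into one kernel-verified Lean document; each statement's English description precedes it below -/
import Mathlib

section
/- Let X be a compact Hausdorff topological space and Y a metrizable topological space. Then every relatively countably compact subset of C(X,Y) with the topology of pointwise convergence is relatively compact; that is, if F ⊆ C(X,Y) is such that every sequence in F has a cluster point in C_p(X,Y), then the closure of F in C_p(X,Y) is compact. -/
/-- `Cp X Y`: continuous maps from `X` to `Y` with the topology of pointwise
convergence (subspace of the product `X → Y`). -/
def Cp (X Y : Type*) [TopologicalSpace X] [TopologicalSpace Y] : Type _ :=
  {f : X → Y // Continuous f}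

instance (X Y : Type*) [TopologicalSpace X] [TopologicalSpace Y] :
    TopologicalSpace (Cp X Y) :=
  TopologicalSpace.induced (fun f : Cp X Y => (f.1 : X → Y)) Pi.topologicalSpace

open Filter Topology Set Metric

/-- In a metric space, a set all of whose sequences have cluster points in the ambient
space has compact closure. -/
lemma relcc_isCompact_closure {Y : Type*} [MetricSpace Y] {A : Set Y}
    (h : ∀ v : ℕ → Y, (∀ n, v n ∈ A) → ∃ y : Y, MapClusterPt y atTop v) :
    IsCompact (closure A) := by
  apply IsSeqCompact.isCompact
  intro v hv
  have : ∀ n : ℕ, ∃ a ∈ A, dist (v n) a < 1 / (n + 1) := fun n =>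
    Metric.mem_closure_iff.1 (hv n) _ (by positivity)
  choose a ha hd using this
  obtain ⟨y, hy⟩ := h a ha
  obtain ⟨ψ, hψ, hψt⟩ := TopologicalSpace.FirstCountableTopology.tendsto_subseq hy
  refine ⟨y, mem_closure_of_tendsto hψt (Eventually.of_forall fun k => ha _), ψ, hψ, ?_⟩
  rw [tendsto_iff_dist_tendsto_zero]
  apply squeeze_zero (fun k => dist_nonneg)
    (g := fun k => 1 / (ψ k + 1 : ℝ) + dist (a (ψ k)) y)
  · intro k
    calc dist (v (ψ k)) y ≤ dist (v (ψ k)) (a (ψ k)) + dist (a (ψ k)) y := dist_triangle _ _ _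
    _ ≤ 1 / (ψ k + 1) + dist (a (ψ k)) y := by
        have := (hd (ψ k)).le; gcongr
  · have h1 : Tendsto (fun k : ℕ => 1 / ((ψ k : ℝ) + 1)) atTop (𝓝 0) := by
      exact_mod_cast (tendsto_one_div_add_atTop_nhds_zero_nat (𝕜 := ℝ)).comp hψ.tendsto_atTop
    have h2 : Tendsto (fun k => dist (a (ψ k)) y) atTop (𝓝 0) :=
      tendsto_iff_dist_tendsto_zero.1 hψt
    simpa using h1.add h2

lemma isOpen_near {X Y : Type*} [TopologicalSpace X] [MetricSpace Y]
    (T : Finset X) (g : X → Y) (δ : ℝ) :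
    IsOpen {h : X → Y | ∀ p ∈ T, dist (h p) (g p) < δ} := by
  have : {h : X → Y | ∀ p ∈ T, dist (h p) (g p) < δ}
      = ⋂ p ∈ T, (fun h : X → Y => h p) ⁻¹' Metric.ball (g p) δ := by
    ext h; simp [Metric.mem_ball]
  rw [this]
  exact isOpen_biInter_finset fun p _ => (Metric.isOpen_ball).preimage (continuous_apply p)

lemma exists_close_of_mem_closure {X Y : Type*} [TopologicalSpace X] [MetricSpace Y]
    {A : Set (X → Y)} {g : X → Y} (hg : g ∈ closure A) (T : Finset X) {δ : ℝ} (hδ : 0 < δ) :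
    ∃ f ∈ A, ∀ p ∈ T, dist (f p) (g p) < δ := by
  obtain ⟨f, hf1, hf2⟩ := _root_.mem_closure_iff.1 hg _ (isOpen_near T g δ)
    (fun p _ => by simpa using hδ)
  exact ⟨f, hf2, hf1⟩

lemma freq_close {X Y : Type*} [TopologicalSpace X] [MetricSpace Y]
    {u : ℕ → X → Y} {φ : X → Y} (h : MapClusterPt φ atTop u) (T : Finset X) {δ : ℝ}
    (hδ : 0 < δ) :
    ∃ᶠ n in atTop, ∀ p ∈ T, dist (u n p) (φ p) < δ :=
  mapClusterPt_iff_frequently.1 h _ ((isOpen_near T φ δ).mem_nhds (fun p _ => by simpa using hδ))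

lemma clusterPt_mem_of_eventually {Z : Type*} [TopologicalSpace Z] {v : ℕ → Z} {y : Z}
    (hy : MapClusterPt y atTop v) {C : Set Z} (hC : IsClosed C) {N : ℕ}
    (h : ∀ n ≥ N, v n ∈ C) : y ∈ C := by
  have h1 : C ∈ Filter.map v atTop := mem_map.2 (eventually_atTop.2 ⟨N, h⟩)
  have h2 := hy.clusterPt.mono (le_principal_iff.2 h1)
  rw [← mem_closure_iff_clusterPt] at h2
  rwa [hC.closure_eq] at h2

/-- The key continuity lemma: any pointwise limit of a relatively countably compact
family of continuous functions on a compact space is continuous. -/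
lemma continuous_of_mem_closure {X Y : Type*} [TopologicalSpace X] [CompactSpace X]
    [MetricSpace Y] {F : Set (Cp X Y)}
    (hF : ∀ u : ℕ → Cp X Y, (∀ n, u n ∈ F) → ∃ g : Cp X Y, MapClusterPt g atTop u)
    {g : X → Y} (hg : g ∈ closure ((fun h : Cp X Y => h.1) '' F)) : Continuous g := by
  classical
  rw [continuous_iff_continuousAt]
  by_contra hcont
  push_neg at hcont
  obtain ⟨x₀, hx₀⟩ := hcont
  obtain ⟨ε, hε, hfreq⟩ : ∃ ε > 0, ∃ᶠ x in 𝓝 x₀, ε ≤ dist (g x) (g x₀) := by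
    rw [ContinuousAt, Metric.tendsto_nhds] at hx₀
    push_neg at hx₀
    obtain ⟨ε, hε, h⟩ := hx₀
    exact ⟨ε, hε, by simpa [not_lt] using Filter.not_eventually.1 h⟩
  have hδ : (0 : ℝ) < ε / 10 := by linarith
  -- construct the double sequence
  obtain ⟨c, hP, hr⟩ := exists_seq_of_forall_finset_exists
    (fun p : Cp X Y × X => p.1 ∈ F ∧ dist (p.1.1 x₀) (g x₀) < ε / 10 ∧
      ε ≤ dist (g p.2) (g x₀))
    (fun p q => dist (q.1.1 p.2) (g p.2) < ε / 10 ∧ dist (p.1.1 q.2) (p.1.1 x₀) < ε / 10)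
    (by
      intro s hs
      classical
      obtain ⟨fv, hfvA, hfvclose⟩ := exists_close_of_mem_closure hg
        (insert x₀ (s.image Prod.snd)) hδ
      obtain ⟨fq, hfqF, rfl⟩ := hfvA
      set U : Set X := {x | ∀ p ∈ s, dist (p.1.1 x) (p.1.1 x₀) < ε / 10} with hUdef
      have hUopen : IsOpen U := by
        have : U = ⋂ p ∈ s, (p.1.1) ⁻¹' Metric.ball (p.1.1 x₀) (ε / 10) := by
          ext x; simp [hUdef, Metric.mem_ball]
        rw [this]
        exact isOpen_biInter_finset fun p _ => Metric.isOpen_ball.preimage p.1.2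
      have hU : U ∈ 𝓝 x₀ := hUopen.mem_nhds (fun p _ => by simpa using hδ)
      have hUe : ∀ᶠ x in 𝓝 x₀, x ∈ U := hU
      obtain ⟨xq, hxq1, hxq2⟩ := (hfreq.and_eventually hUe).exists
      refine ⟨(fq, xq), ⟨hfqF, hfvclose x₀ (Finset.mem_insert_self _ _), hxq1⟩, ?_⟩
      intro p hp
      exact ⟨hfvclose p.2 (Finset.mem_insert_of_mem
        (Finset.mem_image_of_mem Prod.snd hp)), hxq2 p hp⟩)
  set f : ℕ → Cp X Y := fun n => (c n).1 with hfdef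
  set x : ℕ → X := fun n => (c n).2 with hxdef
  obtain ⟨φ, hφ⟩ := hF f (fun n => (hP n).1)
  have hecont : Continuous (fun h : Cp X Y => h.1) := continuous_induced_dom
  have hφv : MapClusterPt φ.1 atTop (fun n => (f n).1) :=
    hφ.continuousAt_comp hecont.continuousAt
  obtain ⟨z, hz⟩ := exists_clusterPt_of_compactSpace (map x atTop)
  have hz : MapClusterPt z atTop x := hz
  -- fact 1
  have fact1 : ∀ n, dist (φ.1 (x n)) (g (x n)) ≤ ε / 5 := by
    intro n
    obtain ⟨m, hm1, hm2⟩ := ((freq_close hφv {x n} hδ).and_eventually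
      (eventually_ge_atTop (n + 1))).exists
    have h1 : dist ((f m).1 (x n)) (g (x n)) < ε / 10 := (hr n m (by omega)).1
    have h2 : dist ((f m).1 (x n)) (φ.1 (x n)) < ε / 10 := hm1 (x n) (by simp)
    have t := dist_triangle (φ.1 (x n)) ((f m).1 (x n)) (g (x n))
    rw [dist_comm] at h2
    linarith
  have fact1b : dist (φ.1 x₀) (g x₀) ≤ ε / 5 := by
    obtain ⟨m, hm⟩ := (freq_close hφv {x₀} hδ).exists
    have h1 : dist ((f m).1 x₀) (g x₀) < ε / 10 := (hP m).2.1
    have h2 : dist ((f m).1 x₀) (φ.1 x₀) < ε / 10 := hm x₀ (by simp)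
    have t := dist_triangle (φ.1 x₀) ((f m).1 x₀) (g x₀)
    rw [dist_comm] at h2
    linarith
  -- fact 2
  have fact2 : ∀ m, dist ((f m).1 z) ((f m).1 x₀) ≤ ε / 10 := by
    intro m
    have hcl : MapClusterPt ((f m).1 z) atTop (fun n => (f m).1 (x n)) :=
      hz.continuousAt_comp (f m).2.continuousAt
    have := clusterPt_mem_of_eventually hcl
      (Metric.isClosed_closedBall (x := (f m).1 x₀) (ε := ε / 10)) (N := m + 1)
      (fun n hn => Metric.mem_closedBall.2 (hr m n (by omega)).2.le)
    exact Metric.mem_closedBall.1 this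
  -- fact 3
  have fact3 : dist (φ.1 z) (φ.1 x₀) ≤ 3 * (ε / 10) := by
    obtain ⟨m, hm⟩ := (freq_close hφv {z, x₀} hδ).exists
    have ha : dist ((f m).1 z) (φ.1 z) < ε / 10 := hm z (by simp)
    have hb : dist ((f m).1 x₀) (φ.1 x₀) < ε / 10 := hm x₀ (by simp)
    have t := dist_triangle4 (φ.1 z) ((f m).1 z) ((f m).1 x₀) (φ.1 x₀)
    rw [dist_comm] at ha
    linarith [fact2 m]
  -- conclusion
  have fact6 : MapClusterPt (φ.1 z) atTop (fun n => φ.1 (x n)) :=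
    hz.continuousAt_comp φ.2.continuousAt
  obtain ⟨n, hn⟩ := (mapClusterPt_iff_frequently.1 fact6 (Metric.ball (φ.1 z) (ε / 10))
    (Metric.ball_mem_nhds _ hδ)).exists
  have hn' : dist (φ.1 (x n)) (φ.1 z) < ε / 10 := Metric.mem_ball.1 hn
  have h5 : ε ≤ dist (g (x n)) (g x₀) := (hP n).2.2
  have t1 := dist_triangle4 (g (x n)) (φ.1 (x n)) (φ.1 z) (g x₀)
  have t2 := dist_triangle (φ.1 z) (φ.1 x₀) (g x₀)
  have f1 := fact1 n
  rw [dist_comm (φ.1 (x n)) (g (x n))] at f1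
  linarith

/-- Grothendieck's theorem: if `X` is compact Hausdorff and `Y` is metrizable, then every
relatively countably compact subset of `C_p(X,Y)` is relatively compact. -/
theorem grothendieck {X Y : Type*} [TopologicalSpace X] [TopologicalSpace Y]
    [CompactSpace X] [T2Space X] [TopologicalSpace.MetrizableSpace Y]
    (F : Set (Cp X Y))
    (hF : ∀ u : ℕ → Cp X Y, (∀ n, u n ∈ F) →
      ∃ g : Cp X Y, MapClusterPt g Filter.atTop u) :
    IsCompact (closure F) := by
  letI : MetricSpace Y := TopologicalSpace.metrizableSpaceMetric Y
  set e : Cp X Y → (X → Y) := fun h => h.1 with he_def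
  have hind : Topology.IsInducing e := ⟨rfl⟩
  have hA : ∀ x : X, IsCompact (closure ((fun h : Cp X Y => h.1 x) '' F)) := by
    intro x
    apply relcc_isCompact_closure
    intro v hv
    choose u hu1 hu2 using hv
    obtain ⟨φ, hφ⟩ := hF u hu1
    have hc : MapClusterPt (φ.1 x) atTop (fun n => (u n).1 x) :=
      hφ.continuousAt_comp ((continuous_apply x).comp continuous_induced_dom).continuousAt
    have heq : (fun n => (u n).1 x) = v := funext hu2
    exact ⟨φ.1 x, heq ▸ hc⟩
  have hScont : ∀ g ∈ closure (e '' F), Continuous g := fun g hg =>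
    continuous_of_mem_closure hF hg
  have hSsub : closure (e '' F) ⊆ Set.range e := fun g hg => ⟨⟨g, hScont g hg⟩, rfl⟩
  have hScomp : IsCompact (closure (e '' F)) := by
    refine IsCompact.of_isClosed_subset (isCompact_univ_pi fun x => hA x) isClosed_closure ?_
    apply closure_minimal ?_ (isClosed_set_pi fun x _ => isClosed_closure)
    rintro _ ⟨h, hh, rfl⟩ x _
    exact subset_closure (Set.mem_image_of_mem _ hh)
  rw [hind.closure_eq_preimage_closure_image F]
  exact (hind.isCompact_preimage_iff hSsub).2 hScomp
end

section
/- Let X and Y be Tychonoff (completely regular Hausdorff) spaces, where Y is a μ-space with countable pseudocharacter (every point of Y is a countable intersection of open sets). If there exists a continuous bijection f : X → Y, then X is a μ-space. -/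
/-- A subset `A` of a topological space `Z` is bounded if every continuous real-valued
function on `Z` is bounded on `A`. -/
def IsFunctionallyBounded {Z : Type*} [TopologicalSpace Z] (A : Set Z) : Prop :=
  ∀ g : Z → ℝ, Continuous g → ∃ C : ℝ, ∀ z ∈ A, |g z| ≤ C

/-- A topological space is a μ-space if every bounded subset has compact closure. -/
def IsMuSpace (Z : Type*) [TopologicalSpace Z] : Prop :=
  ∀ A : Set Z, IsFunctionallyBounded A → IsCompact (closure A)

open Set Topology Filter

/-- For a Tychonoff space, the unit map into the Stone–Čech compactification is inducing. -/
lemma isInducing_stoneCechUnit_aux {Z : Type*} [TopologicalSpace Z] [T35Space Z] :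
    Topology.IsInducing (stoneCechUnit : Z → StoneCech Z) := by
  rw [isInducing_iff_nhds]
  intro x
  refine le_antisymm ((continuous_stoneCechUnit.tendsto x).le_comap) ?_
  intro U hU
  rw [Filter.mem_comap]
  rcases mem_nhds_iff.mp hU with ⟨U', hU'U, hU'open, hxU'⟩
  obtain ⟨g, gc, gx, gK⟩ := CompletelyRegularSpace.completely_regular x U'ᶜ
    hU'open.isClosed_compl (by simpa using hxU')
  have hGc : Continuous fun q : StoneCech Z => ((stoneCechExtend gc q : unitInterval) : ℝ) :=
    continuous_subtype_val.comp (continuous_stoneCechExtend gc)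
  refine ⟨(fun q : StoneCech Z => ((stoneCechExtend gc q : unitInterval) : ℝ)) ⁻¹' Set.Iio 1,
    ?_, ?_⟩
  · refine (isOpen_Iio.preimage hGc).mem_nhds ?_
    have hx : stoneCechExtend gc (stoneCechUnit x) = g x :=
      congrFun (stoneCechExtend_extends gc) x
    simp only [Set.mem_preimage, hx, gx, Set.mem_Iio]
    norm_num
  · intro z hz
    simp only [Set.mem_preimage, Set.mem_Iio] at hz
    by_contra hzU
    have hz' : z ∈ U'ᶜ := fun h => hzU (hU'U h)
    have hgz : stoneCechExtend gc (stoneCechUnit z) = g z :=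
      congrFun (stoneCechExtend_extends gc) z
    have : g z = 1 := gK hz'
    rw [hgz, this] at hz
    norm_num at hz

/-- Lemma 2.2: if `X`, `Y` are Tychonoff, `Y` is a μ-space of countable pseudocharacter,
and there is a condensation (continuous bijection) `f : X → Y`, then `X` is a μ-space. -/
theorem muSpace_of_condensation {X Y : Type*} [TopologicalSpace X] [TopologicalSpace Y]
    [T35Space X] [T35Space Y]
    (hY : IsMuSpace Y)
    (hψ : ∀ y : Y, ∃ s : ℕ → Set Y, (∀ n, IsOpen (s n)) ∧ (⋂ n, s n) = {y})
    (f : X → Y) (hf : Continuous f) (hbij : Function.Bijective f) :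
    IsMuSpace X := by
  intro A hA
  rcases A.eq_empty_or_nonempty with rfl | ⟨a₀, ha₀⟩
  · simpa using isCompact_empty
  have he : Topology.IsEmbedding (stoneCechUnit : X → StoneCech X) :=
    ⟨isInducing_stoneCechUnit_aux, injective_stoneCechUnit_of_t35Space⟩
  have heY : Topology.IsInducing (stoneCechUnit : Y → StoneCech Y) :=
    isInducing_stoneCechUnit_aux
  have hgc : Continuous (fun x : X => stoneCechUnit (f x) : X → StoneCech Y) :=
    continuous_stoneCechUnit.comp hf
  set F : StoneCech X → StoneCech Y := stoneCechExtend hgc with hFdef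
  have hFc : Continuous F := continuous_stoneCechExtend hgc
  have hFe : ∀ x : X, F (stoneCechUnit x) = stoneCechUnit (f x) :=
    fun x => congrFun (stoneCechExtend_extends hgc) x
  -- `f '' A` is functionally bounded in `Y`.
  have hfA : IsFunctionallyBounded (f '' A) := by
    intro g hg
    obtain ⟨C, hC⟩ := hA (g ∘ f) (hg.comp hf)
    exact ⟨C, by rintro y ⟨x, hx, rfl⟩; exact hC x hx⟩
  have hK : IsCompact (closure (f '' A)) := hY _ hfA
  -- Key claim: the closure of the image of `A` in `βX` lies in the image of `X`.
  have key : closure (stoneCechUnit '' A) ⊆ Set.range (stoneCechUnit : X → StoneCech X) := by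
    intro p hp
    have h1 : F p ∈ stoneCechUnit '' closure (f '' A) := by
      have hmem : F p ∈ closure (F '' (stoneCechUnit '' A)) :=
        image_closure_subset_closure_image hFc ⟨p, hp, rfl⟩
      have himg : F '' (stoneCechUnit '' A) = stoneCechUnit '' (f '' A) := by
        rw [← Set.image_comp, ← Set.image_comp]
        exact Set.image_congr' hFe
      have hcl : IsClosed (stoneCechUnit '' closure (f '' A)) :=
        (hK.image continuous_stoneCechUnit).isClosed
      rw [himg] at hmem
      exact hcl.closure_subset_iff.mpr (Set.image_mono subset_closure) hmem
    obtain ⟨y, _, hy⟩ := h1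
    obtain ⟨x, rfl⟩ := hbij.2 y
    by_contra hpr
    have hpx : p ≠ stoneCechUnit x := fun h => hpr (h ▸ Set.mem_range_self x)
    obtain ⟨s, hsopen, hsy⟩ := hψ (f x)
    have hfxs : ∀ n, f x ∈ s n := by
      intro n
      have : f x ∈ ⋂ n, s n := hsy ▸ Set.mem_singleton _
      exact Set.mem_iInter.mp this n
    -- choose open sets in βY inducing the `s n`
    have hW : ∀ n, ∃ W : Set (StoneCech Y), IsOpen W ∧ stoneCechUnit ⁻¹' W = s n := by
      intro n
      rcases heY.isOpen_iff.mp (hsopen n) with ⟨W, hWo, hWe⟩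
      exact ⟨W, hWo, hWe⟩
    choose W hWopen hWpre using hW
    -- the Gδ pieces in βX
    set G : ℕ → Set (StoneCech X) :=
      fun n => F ⁻¹' (W n) ∩ {stoneCechUnit x}ᶜ with hGdef
    have hGopen : ∀ n, IsOpen (G n) :=
      fun n => ((hWopen n).preimage hFc).inter isClosed_singleton.isOpen_compl
    have hpG : ∀ n, p ∈ G n := by
      intro n
      refine ⟨?_, hpx⟩
      show F p ∈ W n
      rw [← hy]
      have : f x ∈ stoneCechUnit ⁻¹' (W n) := (hWpre n).symm ▸ hfxs n
      exact this
    -- points of X avoid the intersection of the G n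
    have hXavoid : ∀ z : X, ∃ n, stoneCechUnit z ∉ G n := by
      intro z
      by_contra hcon
      push_neg at hcon
      have hz : ∀ n, f z ∈ s n := by
        intro n
        have : F (stoneCechUnit z) ∈ W n := (hcon n).1
        rw [hFe z] at this
        rw [← hWpre n]
        exact this
      have : f z ∈ ⋂ n, s n := Set.mem_iInter.mpr hz
      rw [hsy] at this
      have hzx : z = x := hbij.1 this
      exact (hcon 0).2 (by rw [hzx]; exact Set.mem_singleton _)
    -- Urysohn functions separating p from the complements of G n
    have hsep : ∀ n, ∃ φ : C(StoneCech X, ℝ),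
        Set.EqOn φ 0 {p} ∧ Set.EqOn φ 1 (G n)ᶜ ∧ ∀ q, φ q ∈ Set.Icc (0:ℝ) 1 := by
      intro n
      exact exists_continuous_zero_one_of_isClosed isClosed_singleton
        (hGopen n).isClosed_compl
        (Set.disjoint_left.mpr (by rintro q rfl; simpa using hpG n))
    choose φ hφ0 hφ1 hφmem using hsep
    -- the sum function
    set h : StoneCech X → ℝ := fun q => ∑' n, ((1:ℝ)/2) ^ n * φ n q with hhdef
    have hterm_nonneg : ∀ n q, 0 ≤ ((1:ℝ)/2) ^ n * φ n q := by
      intro n q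
      exact mul_nonneg (by positivity) (hφmem n q).1
    have hterm_le : ∀ n q, ‖((1:ℝ)/2) ^ n * φ n q‖ ≤ ((1:ℝ)/2) ^ n := by
      intro n q
      rw [Real.norm_eq_abs, abs_mul, abs_of_nonneg (by positivity : (0:ℝ) ≤ ((1:ℝ)/2)^n)]
      calc ((1:ℝ)/2) ^ n * |φ n q| ≤ ((1:ℝ)/2) ^ n * 1 := by
            apply mul_le_mul_of_nonneg_left _ (by positivity)
            rw [abs_of_nonneg (hφmem n q).1]
            exact (hφmem n q).2
        _ = ((1:ℝ)/2) ^ n := mul_one _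
    have hsummable : ∀ q, Summable fun n => ((1:ℝ)/2) ^ n * φ n q := by
      intro q
      refine Summable.of_nonneg_of_le (fun n => hterm_nonneg n q) ?_ summable_geometric_two
      intro n
      calc ((1:ℝ)/2) ^ n * φ n q ≤ ((1:ℝ)/2) ^ n * 1 := by
            exact mul_le_mul_of_nonneg_left (hφmem n q).2 (by positivity)
        _ = ((1:ℝ)/2) ^ n := mul_one _
    have hhc : Continuous h := by
      apply continuous_tsum (fun n => continuous_const.mul (φ n).continuous)
        summable_geometric_two
      intro n q
      exact hterm_le n q
    have hhp : h p = 0 := by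
      have : ∀ n, ((1:ℝ)/2) ^ n * φ n p = 0 := by
        intro n
        rw [hφ0 n (Set.mem_singleton p), Pi.zero_apply, mul_zero]
      simp only [hhdef, this, tsum_zero]
    -- h is strictly positive on the image of X
    have hhpos : ∀ z : X, 0 < h (stoneCechUnit z) := by
      intro z
      obtain ⟨n, hn⟩ := hXavoid z
      have h1 : φ n (stoneCechUnit z) = 1 := hφ1 n hn
      have : ((1:ℝ)/2) ^ n ≤ h (stoneCechUnit z) := by
        have := Summable.le_tsum (hsummable (stoneCechUnit z)) n
          (fun m _ => hterm_nonneg m (stoneCechUnit z))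
        rw [h1, mul_one] at this
        exact this
      calc (0:ℝ) < ((1:ℝ)/2) ^ n := by positivity
        _ ≤ _ := this
    -- boundedness of A yields a contradiction
    have hgc' : Continuous fun z : X => (h (stoneCechUnit z))⁻¹ :=
      (hhc.comp continuous_stoneCechUnit).inv₀ fun z => (hhpos z).ne'
    obtain ⟨C, hC⟩ := hA _ hgc'
    have hCpos : 0 < C := lt_of_lt_of_le (by
        rw [abs_of_pos (inv_pos.mpr (hhpos a₀))]
        exact inv_pos.mpr (hhpos a₀)) (hC a₀ ha₀)
    have hlow : ∀ z ∈ A, C⁻¹ ≤ h (stoneCechUnit z) := by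
      intro z hz
      have h1 : (h (stoneCechUnit z))⁻¹ ≤ C := by
        have := hC z hz
        rwa [abs_of_pos (inv_pos.mpr (hhpos z))] at this
      exact (inv_le_comm₀ (hhpos z) hCpos).mp h1
    have hclosed : IsClosed {q : StoneCech X | C⁻¹ ≤ h q} :=
      isClosed_le continuous_const hhc
    have hsub : stoneCechUnit '' A ⊆ {q : StoneCech X | C⁻¹ ≤ h q} := by
      rintro q ⟨z, hz, rfl⟩
      exact hlow z hz
    have hpmem : p ∈ {q : StoneCech X | C⁻¹ ≤ h q} :=
      hclosed.closure_subset_iff.mpr hsub hp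
    have : (0:ℝ) < 0 := by
      calc (0:ℝ) < C⁻¹ := inv_pos.mpr hCpos
        _ ≤ h p := hpmem
        _ = 0 := hhp
    exact absurd this (lt_irrefl 0)
  -- conclude compactness of the closure of A
  have himg : stoneCechUnit '' closure A = closure (stoneCechUnit '' A) := by
    apply Set.Subset.antisymm
    · exact image_closure_subset_closure_image continuous_stoneCechUnit
    · intro q hq
      obtain ⟨x, rfl⟩ := key hq
      refine ⟨x, ?_, rfl⟩
      rw [he.isInducing.closure_eq_preimage_closure_image]
      exact hq
  rw [he.isCompact_iff, himg]
  exact isClosed_closure.isCompact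
end

section
/- Let {X_α, π^{α₁}_{α₂}, A} be an inverse system of Tychonoff spaces with inverse limit X, and let 𝒫 be a property of subsets that is preserved under continuous images and implies boundedness. If for every α ∈ A every subset of X_α having property 𝒫 is relatively compact, then every subset B ⊆ X having property 𝒫 is relatively compact in X. -/
universe u

/-- A property `P` of subsets of topological spaces is continuously invariant if it is
preserved by continuous images. -/
def ContinuouslyInvariant
    (P : ∀ (Z : Type u) [TopologicalSpace Z], Set Z → Prop) : Prop :=
  ∀ (Z W : Type u) [TopologicalSpace Z] [TopologicalSpace W] (f : Z → W),
    Continuous f → ∀ S : Set Z, P Z S → P W (f '' S)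

/-- A property `P` is of boundedness type if every subset with `P` is bounded, i.e., every
continuous real-valued function on the ambient space is bounded on it. -/
def BoundednessType (P : ∀ (Z : Type u) [TopologicalSpace Z], Set Z → Prop) : Prop :=
  ∀ (Z : Type u) [TopologicalSpace Z] (S : Set Z), P Z S →
    ∀ g : Z → ℝ, Continuous g → ∃ C : ℝ, ∀ z ∈ S, |g z| ≤ C

/-- Lemma 5.1: in an inverse limit of Tychonoff spaces in which every subset with the
boundedness-type continuously invariant property `P` is relatively compact, every subset
with `P` is relatively compact. -/
theorem invLimit_relatively_compact
    {A : Type u} [Preorder A] (X : A → Type u)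
    [∀ a, TopologicalSpace (X a)] [∀ a, T35Space (X a)]
    (π : ∀ {a b : A}, a ≤ b → X b → X a)
    (hπ : ∀ {a b : A} (hab : a ≤ b), Continuous (π hab))
    (P : ∀ (Z : Type u) [TopologicalSpace Z], Set Z → Prop)
    (hP_inv : ContinuouslyInvariant P) (hP_bdd : BoundednessType P)
    (hcpt : ∀ a : A, ∀ S : Set (X a), P (X a) S → IsCompact (closure S))
    (B : Set {x : ∀ a, X a // ∀ (a b : A) (hab : a ≤ b), π hab (x b) = x a})
    (hB : P _ B) :
    IsCompact (closure B) := by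
  classical
  let Y := {x : ∀ a, X a // ∀ (a b : A) (hab : a ≤ b), π hab (x b) = x a}
  let ι : Y → ∀ a, X a := Subtype.val
  have hclosed : IsClosed {x : ∀ a, X a | ∀ (a b : A) (hab : a ≤ b), π hab (x b) = x a} := by
    have heq : {x : ∀ a, X a | ∀ (a b : A) (hab : a ≤ b), π hab (x b) = x a}
        = ⋂ (a : A), ⋂ (b : A), ⋂ (hab : a ≤ b), {x : ∀ a, X a | π hab (x b) = x a} := by
      ext x; simp [Set.mem_iInter]
    rw [heq]
    refine isClosed_iInter fun a => isClosed_iInter fun b => isClosed_iInter fun hab => ?_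
    exact isClosed_eq ((hπ hab).comp (continuous_apply b)) (continuous_apply a)
  have hemb : Topology.IsClosedEmbedding ι := Topology.IsClosedEmbedding.subtypeVal hclosed
  have hKa : ∀ a, IsCompact (closure ((fun x : Y => x.1 a) '' B)) := fun a =>
    hcpt a _ (hP_inv _ _ _ ((continuous_apply a).comp continuous_subtype_val) B hB)
  have hK : IsCompact (Set.pi Set.univ fun a => closure ((fun x : Y => x.1 a) '' B)) :=
    isCompact_univ_pi hKa
  have hsub : ι '' B ⊆ Set.pi Set.univ fun a => closure ((fun x : Y => x.1 a) '' B) := by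
    rintro _ ⟨x, hx, rfl⟩ a _
    exact subset_closure ⟨x, hx, rfl⟩
  have hKclosed : IsClosed (Set.pi Set.univ fun a => closure ((fun x : Y => x.1 a) '' B)) :=
    isClosed_set_pi fun a _ => isClosed_closure
  have h1 : IsCompact (closure (ι '' B)) :=
    hK.of_isClosed_subset isClosed_closure (closure_minimal hsub hKclosed)
  have h2 : ι '' closure B = closure (ι '' B) := by
    apply Set.Subset.antisymm
    · exact (hemb.continuous.continuousOn).image_closure.trans
        (closure_mono (Set.Subset.refl _))
    · exact hemb.isClosedMap.closure_image_subset B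
  rw [hemb.toIsEmbedding.isCompact_iff (s := closure B)]
  rw [← h2] at h1
  exact h1
end

section
/- Let X = ℝ^Λ be a product of copies of the real line indexed by an uncountable set Λ. For n ∈ ℕ let A = {y ∈ X : the support supp(y) = {α : y_α ≠ 0} has at most n elements, and y_α = n for every α ∈ supp(y)}. Then the closure of A in X is A ∪ {0}, where 0 is the point with all coordinates zero. -/
/-- In `ℝ^Λ` with `Λ` uncountable, the closure of the set
`A = {y : |supp y| ≤ n and y_α = n on supp y}` is `A ∪ {0}`. -/
theorem closure_support_set {Λ : Type*} [Uncountable Λ] (n : ℕ) :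
    closure {y : Λ → ℝ | (Function.support y).Finite ∧ (Function.support y).ncard ≤ n ∧
        ∀ α ∈ Function.support y, y α = n} =
      {y : Λ → ℝ | (Function.support y).Finite ∧ (Function.support y).ncard ≤ n ∧
        ∀ α ∈ Function.support y, y α = n} ∪ {0} := by
  set A : Set (Λ → ℝ) := {y : Λ → ℝ | (Function.support y).Finite ∧
      (Function.support y).ncard ≤ n ∧ ∀ α ∈ Function.support y, y α = n} with hA
  have h0 : (0 : Λ → ℝ) ∈ A := by
    simp [hA]
  have hsub : A ∪ {0} = A := Set.union_eq_self_of_subset_right (by simpa using h0)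
  rw [hsub]
  refine subset_antisymm ?_ subset_closure
  intro x hx
  -- Step 1: each coordinate is 0 or n
  have hval : ∀ α, x α = 0 ∨ x α = n := by
    intro α
    have hclosed : IsClosed {y : Λ → ℝ | y α = 0 ∨ y α = n} := by
      have heq : {y : Λ → ℝ | y α = 0 ∨ y α = n} =
          (fun y : Λ → ℝ => y α) ⁻¹' {0, (n : ℝ)} := rfl
      rw [heq]
      exact (Set.toFinite ({0, (n:ℝ)} : Set ℝ)).isClosed.preimage (continuous_apply α)
    have hAsub : A ⊆ {y | y α = 0 ∨ y α = n} := by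
      intro y hy
      by_cases h : y α = 0
      · exact Or.inl h
      · exact Or.inr (hy.2.2 α h)
    exact closure_minimal hAsub hclosed hx
  -- Step 2: the support is finite with at most n elements
  have hsupp : (Function.support x).Finite ∧ (Function.support x).ncard ≤ n := by
    by_contra hcon
    obtain ⟨s, hs_sub, hs_fin, hs_card⟩ :
        ∃ s ⊆ Function.support x, s.Finite ∧ s.ncard = n + 1 := by
      by_cases hfin : (Function.support x).Finite
      · have hgt : n + 1 ≤ (Function.support x).ncard := by
          rcases Nat.lt_or_ge n (Function.support x).ncard with h | h
          · omega
          · exact absurd ⟨hfin, h⟩ hcon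
        obtain ⟨s, h1, h2⟩ := Set.exists_subset_card_eq hgt
        exact ⟨s, h1, hfin.subset h1, h2⟩
      · obtain ⟨s, h1, h2, h3⟩ :=
          Set.Infinite.exists_subset_ncard_eq hfin (n + 1)
        exact ⟨s, h1, h2, h3⟩
    -- an open neighborhood of x forcing at least n+1 nonzero coordinates
    set U : Set (Λ → ℝ) := ⋂ α ∈ s, {y : Λ → ℝ | y α ≠ 0} with hU
    have hUopen : IsOpen U :=
      hs_fin.isOpen_biInter fun α _ => (isOpen_ne).preimage (continuous_apply α)
    have hxU : x ∈ U := by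
      simp only [hU, Set.mem_iInter, Set.mem_setOf_eq]
      exact fun α hα => hs_sub hα
    obtain ⟨y, hyU, hyA⟩ := mem_closure_iff.mp hx U hUopen hxU
    have hsupy : s ⊆ Function.support y := by
      intro α hα
      have := Set.mem_iInter₂.mp hyU α hα
      exact this
    have : n + 1 ≤ (Function.support y).ncard := by
      rw [← hs_card]
      exact Set.ncard_le_ncard hsupy hyA.1
    have h2 := hyA.2.1
    omega
  exact ⟨hsupp.1, hsupp.2, fun α hα => (hval α).resolve_left hα⟩
end
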